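/- Let μ be a σ-finite measure on X, x ∈ X, and m ∈ ℕ. For every measurable function g : X^m → [0,∞], one has (μ+δ_x)^[m](g) = μ^[m](g) + ∑_{i=1}^m (μ+δ_x)^[m−1](g_i(x,·)), where g_i(x, y₁,…,y_{m−1}) denotes g evaluated at the point whose i-th coordinate is x and whose remaining coordinates are filled in order with y₁,…,y_{m−1}. -/

import Mathlib

open MeasureTheory ProbabilityTheory Filter
open scoped ENNReal Classical

noncomputable section

variable {X : Type*} [MeasurableSpace X]

/-- The measure `μ^[n]` on `X^n`, defined recursively by adding Dirac masses. -/
def seqM (μ : Measure X) : (n : ℕ) → Measure (Fin n → X)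
  | 0 => Measure.dirac (fun i => i.elim0)
  | n + 1 => (seqM μ n).bind
      (fun x => (μ + ∑ i, Measure.dirac (x i)).map (Fin.snoc x))

/-- The rising factorial `w^{(n)} = w (w+1) ⋯ (w+n-1)`. -/
def risingFac (w : ℝ) (n : ℕ) : ℝ := ∏ i ∈ Finset.range n, (w + i)

/-- The Dirichlet distribution, realized as the law of normalized independent
Gamma random variables (with the convention `Gamma(0) = δ₀`). -/
def dirichletLaw {k : ℕ} (α : Fin k → ℝ) : Measure (Fin k → ℝ) :=
  (Measure.pi (fun i => if 0 < α i then gammaMeasure (α i) 1 else Measure.dirac 0)).map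
    (fun y i => y i / ∑ j, y j)

/-- `Q` is the law of a Dirichlet–Ferguson process with parameter measure `ρ`. -/
def IsDFLaw (ρ : Measure X) (Q : Measure (Measure X)) : Prop :=
  IsProbabilityMeasure Q ∧ (∀ᵐ μ ∂Q, IsProbabilityMeasure μ) ∧
    ∀ (k : ℕ) (B : Fin k → Set X), (∀ i, MeasurableSet (B i)) →
      Pairwise (Function.onFun Disjoint B) → (⋃ i, B i) = Set.univ →
      Q.map (fun μ i => (μ (B i)).toReal) = dirichletLaw (fun i => (ρ (B i)).toReal)

/-- `ζ` is a Dirichlet–Ferguson process with parameter measure `ρ` on `(Ω, P)`. -/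
def IsDF {Ω : Type*} [MeasurableSpace Ω] (ρ : Measure X) (P : Measure Ω)
    (ζ : Ω → Measure X) : Prop :=
  Measurable ζ ∧ IsDFLaw ρ (P.map ζ)

/-- The Campbell measure of the random measure `ζ`. -/
def campbell {Ω : Type*} [MeasurableSpace Ω] (P : Measure Ω) (ζ : Ω → Measure X) :
    Measure (Ω × X) :=
  P.bind (fun ω => (ζ ω).map (fun x => (ω, x)))

/-- The space `H_n` of symmetric, conditionally centered functions in `L²(ρ^[n])`. -/
def memH (ρ : Measure X) : (n : ℕ) → ((Fin n → X) → ℝ) → Prop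
  | 0, g => MemLp g 2 (seqM ρ 0)
  | n + 1, g => MemLp g 2 (seqM ρ (n + 1)) ∧
      (∀ π : Equiv.Perm (Fin (n + 1)),
        (fun x => g (x ∘ π)) =ᵐ[seqM ρ (n + 1)] g) ∧
      ∀ᵐ x ∂ seqM ρ n,
        ∫ t, g (Fin.snoc x t) ∂(ρ + ∑ i, Measure.dirac (x i)) = 0

/-- The multiple integral `ζⁿ(f)(ω) = ∫ f d(ζ ω)ⁿ`. -/
def chaosI {Ω : Type*} [MeasurableSpace Ω] (ζ : Ω → Measure X) (n : ℕ)
    (f : (Fin n → X) → ℝ) (ω : Ω) : ℝ :=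
  ∫ z, f z ∂ Measure.pi (fun _ : Fin n => ζ ω)

/-- The total mass `θ = ρ(X)` as a real number. -/
def θr (ρ : Measure X) : ℝ := (ρ Set.univ).toReal

/-- `(θ+n-1) n n!/θ^{(2n)}` at chaos level `n+1`. -/
def gradDomCoeff (ρ : Measure X) (n : ℕ) : ℝ :=
  (θr ρ + n) * ((n : ℝ) + 1) * (Nat.factorial (n + 1) : ℝ) /
    risingFac (θr ρ) (2 * (n + 1))

/-- `F ∈ dom(∇)`, expressed in terms of its chaos kernels `f`. -/
def InDomGrad (ρ : Measure X) (f : (n : ℕ) → (Fin (n + 1) → X) → ℝ) : Prop :=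
  Summable fun n => gradDomCoeff ρ n * ∫ z, (f n z) ^ 2 ∂ seqM ρ (n + 1)

/-- Partial sums of the Malliavin gradient series. -/
def gradPartial {Ω : Type*} [MeasurableSpace Ω] (ζ : Ω → Measure X)
    (f : (n : ℕ) → (Fin (n + 1) → X) → ℝ) (N : ℕ) (p : Ω × X) : ℝ :=
  ∑ n ∈ Finset.range N, ((n : ℝ) + 1) *
    ((∫ y, f n (Fin.cons p.2 y) ∂ Measure.pi (fun _ : Fin n => ζ p.1)) -
      chaosI ζ (n + 1) (f n) p.1)

/-- `G` is the Malliavin gradient of the functional with chaos kernels `f`: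
the gradient series converges to `G` in `L²(C_ζ)`. -/
def HasGradient {Ω : Type*} [MeasurableSpace Ω] (P : Measure Ω) (ζ : Ω → Measure X)
    (f : (n : ℕ) → (Fin (n + 1) → X) → ℝ) (G : Ω × X → ℝ) : Prop :=
  Tendsto (fun N => eLpNorm (fun p => G p - gradPartial ζ f N p) 2 (campbell P ζ))
    atTop (nhds 0)

/-- `F = c₀ + ∑_{n≥1} ζⁿ(fₙ)` with convergence in `L²(P)`. -/
def IsChaosExp {Ω : Type*} [MeasurableSpace Ω] (P : Measure Ω) (ζ : Ω → Measure X)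
    (c₀ : ℝ) (f : (n : ℕ) → (Fin (n + 1) → X) → ℝ) (F : Ω → ℝ) : Prop :=
  Tendsto (fun N => eLpNorm
    (fun ω => F ω - c₀ - ∑ n ∈ Finset.range N, chaosI ζ (n + 1) (f n) ω) 2 P)
    atTop (nhds 0)

/-- `F ∈ dom(L)`, expressed in terms of its chaos kernels `f`. -/
def InDomL (ρ : Measure X) (f : (n : ℕ) → (Fin (n + 1) → X) → ℝ) : Prop :=
  Summable fun n : ℕ => ((θr ρ + (n : ℝ)) ^ 2 * ((n : ℝ) + 1) ^ 2 * (Nat.factorial (n + 1) : ℝ) /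
      risingFac (θr ρ) (2 * (n + 1))) * ∫ z, (f n z) ^ 2 ∂ seqM ρ (n + 1)


/-!
Induction on `k`. Unfolding the last step of the recursion, `(μ + δₓ)^[k+1]` integrates the
last coordinate against `μ + δₓ + ∑ δ_{yᵢ}`; splitting off `δₓ` produces the term with `x` in the
last slot, and what remains is `(μ + δₓ)^[k]` applied to `h y = ∫ g(y, t) (μ + ∑ δ_{yᵢ})(dt)`, to
which the induction hypothesis applies. Since `∑ⱼ δ_{(i.insertNth x y) j} = δₓ + ∑ⱼ δ_{yⱼ}`,
inserting `x` in `h` restores the mass `δₓ` and gives back `(μ + δₓ)^[k+1]` with `x` in slot `i`.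
-/

theorem Fin.insertNth_castSucc_snoc {α : Type*} {n : ℕ} (i : Fin (n + 1)) (x t : α)
    (y : Fin n → α) :
    (i.castSucc.insertNth x (Fin.snoc y t) : Fin (n + 2) → α)
      = Fin.snoc (i.insertNth x y) t := by
  ext j
  cases j using Fin.succAboveCases i.castSucc with
  | x => simp
  | p j =>
    simp only [Fin.insertNth_apply_succAbove]
    cases j using Fin.lastCases <;> simp

theorem Fin.sum_comp_insertNth {α M : Type*} [AddCommMonoid M] {n : ℕ} (f : α → M)
    (i : Fin (n + 1)) (x : α) (y : Fin n → α) :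
    ∑ j, f ((i.insertNth x y : Fin (n + 1) → α) j) = f x + ∑ j, f (y j) := by
  simp [Fin.sum_univ_succAbove _ i]

theorem measurable_insertNth {n : ℕ} (i : Fin (n + 1)) :
    Measurable (fun p : X × (Fin n → X) => (i.insertNth p.1 p.2 : Fin (n + 1) → X)) :=
  (MeasurableEquiv.piFinSuccAbove (fun _ => X) i).symm.measurable

theorem measurable_snoc {n : ℕ} :
    Measurable (fun p : (Fin n → X) × X => (Fin.snoc p.1 p.2 : Fin (n + 1) → X)) := by
  have h := (measurable_insertNth (X := X) (Fin.last n)).comp measurable_swap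
  simpa only [Function.comp_def, Prod.fst_swap, Prod.snd_swap, Fin.insertNth_last'] using h

theorem measurable_snoc_left {n : ℕ} (y : Fin n → X) :
    Measurable (Fin.snoc (α := fun _ => X) y) :=
  measurable_snoc.comp measurable_prodMk_left

variable (μ : Measure X) [SFinite μ] {n : ℕ}

theorem measurable_map_snoc_add_sum_dirac :
    Measurable fun y : Fin n → X =>
      (μ + ∑ i, Measure.dirac (y i)).map (Fin.snoc (α := fun _ => X) y) := by
  have h (y : Fin n → X) : (μ + ∑ i, Measure.dirac (y i)).map (Fin.snoc y)
      = (μ.map (Prod.mk y)).map (fun p => Fin.snoc p.1 p.2)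
        + ∑ i, Measure.dirac (Fin.snoc y (y i) : Fin (n + 1) → X) := by
    rw [Measure.map_add _ _ (measurable_snoc_left y),
      Measure.map_finset_sum' (measurable_snoc_left y).aemeasurable,
      Measure.map_map measurable_snoc measurable_prodMk_left]
    simp only [Measure.map_dirac' (measurable_snoc_left y)]
    rfl
  simp_rw [h]
  exact ((Measure.measurable_map _ measurable_snoc).comp Measurable.map_prodMk_left).add
    (Finset.measurable_sum _ fun i _ => Measure.measurable_dirac.comp
      (measurable_snoc.comp (measurable_id.prodMk (measurable_pi_apply i))))

theorem lintegral_seqM_succ {g : (Fin (n + 1) → X) → ℝ≥0∞} (hg : Measurable g) :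
    ∫⁻ y, g y ∂seqM μ (n + 1)
      = ∫⁻ y, ∫⁻ t, g (Fin.snoc y t) ∂(μ + ∑ i, Measure.dirac (y i)) ∂seqM μ n := by
  rw [seqM, Measure.lintegral_bind (measurable_map_snoc_add_sum_dirac μ).aemeasurable
    hg.aemeasurable]
  exact lintegral_congr fun y => lintegral_map hg (measurable_snoc_left y)

theorem measurable_lintegral_snoc {g : (Fin (n + 1) → X) → ℝ≥0∞} (hg : Measurable g) :
    Measurable fun y : Fin n → X => ∫⁻ t, g (Fin.snoc y t) ∂(μ + ∑ i, Measure.dirac (y i)) := by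
  have h : (fun y : Fin n → X => ∫⁻ t, g (Fin.snoc y t) ∂(μ + ∑ i, Measure.dirac (y i)))
      = (fun ρ => ∫⁻ z, g z ∂ρ) ∘
          fun y => (μ + ∑ i, Measure.dirac (y i)).map (Fin.snoc y) := by
    funext y
    exact (lintegral_map hg (measurable_snoc_left y)).symm
  rw [h]
  exact (Measure.measurable_lintegral hg).comp (measurable_map_snoc_add_sum_dirac μ)

variable (x : X)

theorem lintegral_seqM_add_dirac_succ {g : (Fin (n + 1) → X) → ℝ≥0∞} (hg : Measurable g) :
    ∫⁻ y, g y ∂seqM (μ + Measure.dirac x) (n + 1)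
      = ∫⁻ y, ∫⁻ t, g (Fin.snoc y t) ∂(μ + ∑ i, Measure.dirac (y i))
            ∂seqM (μ + Measure.dirac x) n
        + ∫⁻ y, g (Fin.snoc y x) ∂seqM (μ + Measure.dirac x) n := by
  rw [lintegral_seqM_succ _ hg, ← lintegral_add_left (measurable_lintegral_snoc μ hg)]
  refine lintegral_congr fun y => ?_
  have hgy : Measurable fun t => g (Fin.snoc y t) := hg.comp (measurable_snoc_left y)
  rw [add_right_comm, lintegral_add_measure, lintegral_dirac' x hgy]

theorem lintegral_seqM_add_dirac_insertNth {g : (Fin (n + 2) → X) → ℝ≥0∞}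
    (hg : Measurable g) (i : Fin (n + 1)) :
    ∫⁻ y, ∫⁻ t, g (Fin.snoc (i.insertNth x y) t)
          ∂(μ + ∑ j, Measure.dirac ((i.insertNth x y : Fin (n + 1) → X) j))
        ∂seqM (μ + Measure.dirac x) n
      = ∫⁻ y, g (i.castSucc.insertNth x y) ∂seqM (μ + Measure.dirac x) (n + 1) := by
  have hgi : Measurable fun y => g (i.castSucc.insertNth x y) :=
    hg.comp ((measurable_insertNth i.castSucc).comp (measurable_const.prodMk measurable_id))
  rw [lintegral_seqM_succ _ hgi]
  refine lintegral_congr fun y => ?_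
  simp only [Fin.sum_comp_insertNth, ← add_assoc, Fin.insertNth_castSucc_snoc]

end

theorem statement3 {X : Type*} [MeasurableSpace X] (μ : MeasureTheory.Measure X)
    [MeasureTheory.SigmaFinite μ] (x : X) (k : ℕ)
    (g : (Fin (k + 1) → X) → ℝ≥0∞) (hg : Measurable g) :
    ∫⁻ y, g y ∂ seqM (μ + MeasureTheory.Measure.dirac x) (k + 1)
      = (∫⁻ y, g y ∂ seqM μ (k + 1))
        + ∑ i : Fin (k + 1),
            ∫⁻ y, g (i.insertNth x y) ∂ seqM (μ + MeasureTheory.Measure.dirac x) k := by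
  induction k with
  | zero =>
    rw [lintegral_seqM_add_dirac_succ μ x hg,
      show seqM (μ + Measure.dirac x) 0 = seqM μ 0 from rfl, ← lintegral_seqM_succ μ hg,
      Fin.sum_univ_castSucc]
    simp only [Fin.insertNth_last', Finset.univ_eq_empty, Finset.sum_empty, zero_add]
  | succ k ih =>
    rw [lintegral_seqM_add_dirac_succ μ x hg, ih _ (measurable_lintegral_snoc μ hg),
      ← lintegral_seqM_succ μ hg, Fin.sum_univ_castSucc (n := k + 1)]
    simp only [lintegral_seqM_add_dirac_insertNth μ x hg, Fin.insertNth_last', add_assoc]
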